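/- arXiv:math/0203098 — 6 statements merged into one kernel-verified Lean document; each statement's English description precedes it below -/
import Mathlib

section
/- In a double Lie group (G; A, B), the map s_A : G → G defined by s_A(g) = a_R(g)·b_R(g)⁻¹ is an involution: s_A(s_A(g)) = g for all g ∈ G. -/
/-- Uniqueness of `A·B` decompositions when `A ⊓ B = ⊥`. -/
lemma AB_uniq {G : Type*} [Group G] {A B : Subgroup G} (hAB : A ⊓ B = ⊥)
    {a₁ a₂ b₁ b₂ : G} (ha₁ : a₁ ∈ A) (ha₂ : a₂ ∈ A) (hb₁ : b₁ ∈ B) (hb₂ : b₂ ∈ B)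
    (h : a₁ * b₁ = a₂ * b₂) : a₁ = a₂ ∧ b₁ = b₂ := by
  have key : a₂⁻¹ * a₁ = b₂ * b₁⁻¹ := by
    rw [inv_mul_eq_iff_eq_mul, ← mul_assoc, ← h]
    simp [mul_assoc]
  have hmem : a₂⁻¹ * a₁ ∈ A ⊓ B := by
    constructor
    · exact A.mul_mem (A.inv_mem ha₂) ha₁
    · rw [key]; exact B.mul_mem hb₂ (B.inv_mem hb₁)
  rw [hAB] at hmem
  have h1 : a₂⁻¹ * a₁ = 1 := hmem
  have ha : a₁ = a₂ := (inv_mul_eq_one.mp h1).symm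
  exact ⟨ha, by subst ha; exact mul_left_cancel h⟩

/-- The map `s_A(g) = a_R(g)·b_R(g)⁻¹` is an involution. -/
theorem sA_involutive {G : Type*} [Group G] (A B : Subgroup G)
    (hAB : A ⊓ B = ⊥)
    (aL aR bL bR : G → G)
    (haL : ∀ g, aL g ∈ A) (hbR : ∀ g, bR g ∈ B)
    (hbL : ∀ g, bL g ∈ B) (haR : ∀ g, aR g ∈ A)
    (hdec₁ : ∀ g, g = aL g * bR g)
    (hdec₂ : ∀ g, g = bL g * aR g) :
    ∀ g : G, aR (aR g * (bR g)⁻¹) * (bR (aR g * (bR g)⁻¹))⁻¹ = g := by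
  intro g
  set h := aR g * (bR g)⁻¹ with hh
  -- bR h = (bR g)⁻¹ by uniqueness of A·B decomposition
  have e1 : aL h * bR h = aR g * (bR g)⁻¹ := (hdec₁ h).symm
  obtain ⟨-, hb⟩ := AB_uniq hAB (haL h) (haR g) (hbR h) (B.inv_mem (hbR g)) e1
  -- the two decompositions of g agree
  have hg1 : aL g * bR g = bL g * aR g := (hdec₁ g).symm.trans (hdec₂ g)
  -- h = (bL g)⁻¹ * aL g
  have e2 : (bL g)⁻¹ * aL g = aR g * (bR g)⁻¹ := by
    rw [inv_mul_eq_iff_eq_mul, ← mul_assoc, ← hg1]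
    simp [mul_assoc]
  have e3 : (bL g)⁻¹ * aL g = bL h * aR h := e2.trans (hdec₂ h)
  -- invert to get an A·B equation and apply uniqueness: aR h = aL g
  have e4 : (aL g)⁻¹ * ((bL g)⁻¹)⁻¹ = (aR h)⁻¹ * (bL h)⁻¹ := by
    have := congrArg (·⁻¹) e3
    simpa [mul_inv_rev] using this
  obtain ⟨ha', -⟩ := AB_uniq hAB (A.inv_mem (haL g)) (A.inv_mem (haR h))
    (B.inv_mem (B.inv_mem (hbL g))) (B.inv_mem (hbL h)) e4
  have ha : aR h = aL g := inv_injective ha'.symm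
  rw [ha, hb, inv_inv, ← hdec₁ g]
end

section
/- For a double Lie group (G; A, B) of Lie groups, the function Q : G → ℝ \ {0} defined by Q(g) = det(Ad(g)) / (det(g₁)·det(g₄)), where Ad(g) = (g₁ g₂; g₃ g₄) is the block decomposition of the adjoint representation with respect to 𝔤 = 𝔞 ⊕ 𝔟, satisfies the cocycle identity Q(a·b)·Q(b·a') = Q(a·b·a') for all a, a' ∈ A and b ∈ B. -/
section Aux

variable {V : Type*} [AddCommGroup V] [Module ℝ V] [FiniteDimensional ℝ V]

open Module

/-- Weinstein–Aronszajn identity for endomorphisms. -/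
lemma end_det_one_add_mul_comm (f g : Module.End ℝ V) :
    LinearMap.det (1 + f * g) = LinearMap.det (1 + g * f) := by
  classical
  let b := Module.finBasis ℝ V
  rw [← LinearMap.det_toMatrix b, ← LinearMap.det_toMatrix b, map_add, map_add,
    LinearMap.toMatrix_one, LinearMap.toMatrix_mul, LinearMap.toMatrix_mul]
  exact Matrix.det_one_add_mul_comm _ _

variable (P Q : Module.End ℝ V)
variable (hsum : P + Q = 1) (hP : P * P = P) (hQ : Q * Q = Q)
    (hPQ : P * Q = 0) (hQP : Q * P = 0)

include hsum hP hQ hPQ hQP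

/-- Multiplicativity of `g ↦ det (P * g * P + Q)` when the right factor is
block upper triangular (`Q * N * P = 0`). -/
lemma det_block_mul_right (M N : Module.End ℝ V) (hN : Q * N * P = 0) :
    LinearMap.det (P * (M * N) * P + Q) =
      LinearMap.det (P * M * P + Q) * LinearMap.det (P * N * P + Q) := by
  rw [← map_mul]
  congr 1
  have hP' : ∀ x : Module.End ℝ V, P * (P * x) = P * x := fun x => by
    rw [← mul_assoc, hP]
  have hQ' : ∀ x : Module.End ℝ V, Q * (Q * x) = Q * x := fun x => by
    rw [← mul_assoc, hQ]
  have hPQ' : ∀ x : Module.End ℝ V, P * (Q * x) = 0 := fun x => by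
    rw [← mul_assoc, hPQ, zero_mul]
  have hQP' : ∀ x : Module.End ℝ V, Q * (P * x) = 0 := fun x => by
    rw [← mul_assoc, hQP, zero_mul]
  have hN2 : Q * (N * P) = 0 := by rw [← mul_assoc, hN]
  have hN3 : ∀ x : Module.End ℝ V, Q * (N * (P * x)) = 0 := fun x => by
    rw [← mul_assoc, ← mul_assoc, hN, zero_mul]
  have hins : M * N = M * ((P + Q) * N) := by rw [hsum, one_mul]
  rw [hins]
  simp only [mul_add, add_mul, mul_assoc, mul_one, one_mul, zero_mul, mul_zero,
    add_zero, zero_add, hP, hQ, hPQ, hQP, hP', hQ', hPQ', hQP', hN2, hN3]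

/-- Multiplicativity of `g ↦ det (P * g * P + Q)` when the left factor is
block lower triangular (`P * M * Q = 0`). -/
lemma det_block_mul_left (M N : Module.End ℝ V) (hM : P * M * Q = 0) :
    LinearMap.det (P * (M * N) * P + Q) =
      LinearMap.det (P * M * P + Q) * LinearMap.det (P * N * P + Q) := by
  rw [← map_mul]
  congr 1
  have hP' : ∀ x : Module.End ℝ V, P * (P * x) = P * x := fun x => by
    rw [← mul_assoc, hP]
  have hQ' : ∀ x : Module.End ℝ V, Q * (Q * x) = Q * x := fun x => by
    rw [← mul_assoc, hQ]
  have hPQ' : ∀ x : Module.End ℝ V, P * (Q * x) = 0 := fun x => by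
    rw [← mul_assoc, hPQ, zero_mul]
  have hQP' : ∀ x : Module.End ℝ V, Q * (P * x) = 0 := fun x => by
    rw [← mul_assoc, hQP, zero_mul]
  have hM2 : ∀ x : Module.End ℝ V, P * (M * (Q * x)) = 0 := fun x => by
    rw [← mul_assoc, ← mul_assoc, hM, zero_mul]
  have hins : M * N = M * ((P + Q) * N) := by rw [hsum, one_mul]
  rw [hins]
  simp only [mul_add, add_mul, mul_assoc, mul_one, one_mul, zero_mul, mul_zero,
    add_zero, zero_add, hP, hQ, hPQ, hQP, hP', hQ', hPQ', hQP', hM2]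

/-- Determinant of a block lower triangular endomorphism (`P * M * Q = 0`)
is the product of the determinants of the diagonal blocks. -/
lemma det_block_tri (M : Module.End ℝ V) (hM : P * M * Q = 0) :
    LinearMap.det M = LinearMap.det (P * M * P + Q) * LinearMap.det (Q * M * Q + P) := by
  have hP' : ∀ x : Module.End ℝ V, P * (P * x) = P * x := fun x => by
    rw [← mul_assoc, hP]
  have hQ' : ∀ x : Module.End ℝ V, Q * (Q * x) = Q * x := fun x => by
    rw [← mul_assoc, hQ]
  have hPQ' : ∀ x : Module.End ℝ V, P * (Q * x) = 0 := fun x => by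
    rw [← mul_assoc, hPQ, zero_mul]
  have hQP' : ∀ x : Module.End ℝ V, Q * (P * x) = 0 := fun x => by
    rw [← mul_assoc, hQP, zero_mul]
  have hM1 : P * (M * Q) = 0 := by rw [← mul_assoc, hM]
  have hM2 : ∀ x : Module.End ℝ V, P * (M * (Q * x)) = 0 := fun x => by
    rw [← mul_assoc, ← mul_assoc, hM, zero_mul]
  have hfact : M = ((P * M * P + Q) * (1 + Q * M * P)) * (P + Q * M * Q) := by
    have expand : M = (P + Q) * M * (P + Q) := by rw [hsum, one_mul, mul_one]
    conv_lhs => rw [expand]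
    simp only [mul_add, add_mul, mul_assoc, mul_one, one_mul, zero_mul, mul_zero,
      add_zero, zero_add, hP, hQ, hPQ, hQP, hP', hQ', hPQ', hQP', hM1, hM2]
  have hnil : LinearMap.det (1 + Q * M * P) = 1 := by
    have h0 : P * (Q * M) = 0 := by rw [← mul_assoc, hPQ, zero_mul]
    have := end_det_one_add_mul_comm (Q * M) P
    rw [← mul_assoc] at this
    rw [this, hPQ, zero_mul, add_zero, map_one]
  calc LinearMap.det M
      = LinearMap.det (P * M * P + Q) * LinearMap.det (1 + Q * M * P) *
          LinearMap.det (P + Q * M * Q) := by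
        conv_lhs => rw [hfact]
        rw [map_mul, map_mul]
    _ = LinearMap.det (P * M * P + Q) * LinearMap.det (Q * M * Q + P) := by
        rw [hnil, mul_one, add_comm (Q * M * Q) P]

end Aux

/-- The function `Q(g) = det(Ad g) / (det g₁ · det g₄)`, where the blocks are
taken with respect to `𝔤 = 𝔞 ⊕ 𝔟` (encoded via the projections `PA`, `PB`). -/
noncomputable def Qfun {G V : Type*} [Group G] [AddCommGroup V] [Module ℝ V]
    (Ad : G →* Module.End ℝ V) (PA PB : Module.End ℝ V) (g : G) : ℝ :=
  LinearMap.det ((Ad g : Module.End ℝ V)) /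
    (LinearMap.det (PA * Ad g * PA + PB) * LinearMap.det (PB * Ad g * PB + PA))

/-- Cocycle identity `Q(a·b)·Q(b·a') = Q(a·b·a')` for `a, a' ∈ A`, `b ∈ B`. -/
theorem Q_cocycle {G V : Type*} [Group G] [AddCommGroup V] [Module ℝ V]
    [FiniteDimensional ℝ V]
    (A B : Subgroup G) (hAB : A ⊓ B = ⊥)
    (hG : ∀ g : G, ∃ a ∈ A, ∃ b ∈ B, g = a * b)
    (Ad : G →* Module.End ℝ V) (PA PB : Module.End ℝ V)
    (hsum : PA + PB = 1) (hPA : PA * PA = PA) (hPB : PB * PB = PB)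
    (hPAB : PA * PB = 0) (hPBA : PB * PA = 0)
    (htriA : ∀ a ∈ A, PB * Ad a * PA = 0)
    (htriB : ∀ b ∈ B, PA * Ad b * PB = 0)
    (hinv : ∀ g : G, LinearMap.det (PA * Ad g * PA + PB) ≠ 0 ∧
      LinearMap.det (PB * Ad g * PB + PA) ≠ 0) :
    ∀ a ∈ A, ∀ a' ∈ A, ∀ b ∈ B,
      Qfun Ad PA PB (a * b) * Qfun Ad PA PB (b * a') =
        Qfun Ad PA PB (a * b * a') := by
  intro a ha a' ha' b hb
  -- notation
  set f1 : G → ℝ := fun g => LinearMap.det (PA * Ad g * PA + PB) with hf1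
  set f4 : G → ℝ := fun g => LinearMap.det (PB * Ad g * PB + PA) with hf4
  set d : G → ℝ := fun g => LinearMap.det (Ad g : Module.End ℝ V) with hd
  have hQ : ∀ g, Qfun Ad PA PB g = d g / (f1 g * f4 g) := fun g => rfl
  have hsum' : PB + PA = 1 := by rw [add_comm]; exact hsum
  -- multiplicativity facts
  have hf1_right : ∀ g h : G, PB * Ad h * PA = 0 → f1 (g * h) = f1 g * f1 h := by
    intro g h hh
    simp only [hf1, map_mul]
    exact det_block_mul_right PA PB hsum hPA hPB hPAB hPBA (Ad g) (Ad h) hh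
  have hf1_left : ∀ g h : G, PA * Ad g * PB = 0 → f1 (g * h) = f1 g * f1 h := by
    intro g h hg
    simp only [hf1, map_mul]
    exact det_block_mul_left PA PB hsum hPA hPB hPAB hPBA (Ad g) (Ad h) hg
  have hf4_right : ∀ g h : G, PA * Ad h * PB = 0 → f4 (g * h) = f4 g * f4 h := by
    intro g h hh
    simp only [hf4, map_mul]
    exact det_block_mul_right PB PA hsum' hPB hPA hPBA hPAB (Ad g) (Ad h) hh
  have hf4_left : ∀ g h : G, PB * Ad g * PA = 0 → f4 (g * h) = f4 g * f4 h := by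
    intro g h hg
    simp only [hf4, map_mul]
    exact det_block_mul_left PB PA hsum' hPB hPA hPBA hPAB (Ad g) (Ad h) hg
  have hdb : d b = f1 b * f4 b := by
    simp only [hd, hf1, hf4]
    exact det_block_tri PA PB hsum hPA hPB hPAB hPBA (Ad b) (htriB b hb)
  have hdmul : ∀ g h : G, d (g * h) = d g * d h := by
    intro g h; simp only [hd, map_mul]
  -- the six factorizations
  have e1 : f4 (a * b) = f4 a * f4 b := hf4_left a b (htriA a ha)
  have e2 : f1 (b * a') = f1 b * f1 a' := hf1_right b a' (htriA a' ha')
  have e3 : f1 (a * b * a') = f1 (a * b) * f1 a' := hf1_right (a * b) a' (htriA a' ha')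
  have e4 : f4 (a * b * a') = f4 a * f4 (b * a') := by
    rw [mul_assoc]; exact hf4_left a (b * a') (htriA a ha)
  -- nonvanishing
  have n1 : ∀ g, f1 g ≠ 0 := fun g => (hinv g).1
  have n4 : ∀ g, f4 g ≠ 0 := fun g => (hinv g).2
  rw [hQ, hQ, hQ, div_mul_div_comm, div_eq_div_iff
    (mul_ne_zero (mul_ne_zero (n1 _) (n4 _)) (mul_ne_zero (n1 _) (n4 _)))
    (mul_ne_zero (n1 _) (n4 _))]
  rw [hdmul (a*b) a', hdmul a b, hdmul b a', e1, e2, e3, e4, hdb]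
  ring
end

section
/- For a double Lie group (G; A, B), with ψ_A(a) = det(P_A Ad(a) P_A), ψ_B(a) = det(P_B Ad(a) P_B) for a ∈ A, and φ_A(b) = det(P_A Ad(b) P_A), φ_B(b) = det(P_B Ad(b) P_B) for b ∈ B, the function Q satisfies Q(g) = ψ_A(a_L(g)) φ_A(b_R(g)) / (ψ_A(a_R(g)) φ_A(b_L(g))) for all g ∈ G. -/
/-- Determinant of the `𝔞`-block of `Ad g`; it gives `ψ_A` on `A` and `φ_A` on `B`. -/
noncomputable def detA {G V : Type*} [Group G] [AddCommGroup V] [Module ℝ V]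
    (Ad : G →* Module.End ℝ V) (PA PB : Module.End ℝ V) (g : G) : ℝ :=
  LinearMap.det (PA * Ad g * PA + PB)

theorem LinearMap.det_one_add_mul_comm {R M : Type*} [CommRing R] [AddCommGroup M] [Module R M]
    (f g : Module.End R M) : LinearMap.det (1 + f * g) = LinearMap.det (1 + g * f) := by
  by_cases h : Module.Free R M ∧ Module.Finite R M
  · obtain ⟨_, _⟩ := h
    let b := Module.Free.chooseBasis R M
    rw [← LinearMap.det_toMatrix b, ← LinearMap.det_toMatrix b]
    simp only [map_add, LinearMap.toMatrix_one, LinearMap.toMatrix_mul]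
    exact Matrix.det_one_add_mul_comm _ _
  · have det_eq_one (e : Module.End R M) : LinearMap.det e = 1 := by
      by_contra he
      exact h ⟨LinearMap.free_of_det_ne_one he, LinearMap.finite_of_det_ne_one he⟩
    rw [det_eq_one, det_eq_one]

section CornerDet

variable {R M : Type*} [CommRing R] [AddCommGroup M] [Module R M]

/-- For complementary idempotents `p + q = 1`, this is the determinant of the block of `T` on the
range of `p`. -/
noncomputable def cornerDet (p q T : Module.End R M) : R :=
  LinearMap.det (p * T * p + q)

variable {p q : Module.End R M}

theorem det_mul_add_eq_cornerDet (hpq : p + q = 1) (hp : IsIdempotentElem p)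
    (T : Module.End R M) : LinearMap.det (p * T + q) = cornerDet p q T := by
  obtain rfl : q = 1 - p := eq_sub_of_add_eq' hpq
  have hp : p * p = p := hp
  calc LinearMap.det (p * T + (1 - p)) = LinearMap.det (1 + p * (p * (T - 1))) := by
        congr 1; linear_combination (norm := noncomm_ring) -(hp * (T - 1))
    _ = LinearMap.det (1 + p * (T - 1) * p) := LinearMap.det_one_add_mul_comm _ _
    _ = cornerDet p (1 - p) T := by
        unfold cornerDet; congr 1; linear_combination (norm := noncomm_ring) -hp

theorem det_eq_cornerDet_mul_cornerDet (hpq : p + q = 1) (hp : IsIdempotentElem p)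
    {T : Module.End R M} (hT : q * T * p = 0) :
    LinearMap.det T = cornerDet p q T * cornerDet q p T := by
  have hqp : q + p = 1 := by rw [add_comm, hpq]
  have hq : IsIdempotentElem q := eq_sub_of_add_eq' hpq ▸ hp.one_sub
  have hfac : T = (q * T + p) * (p * T + q) := by
    obtain rfl : q = 1 - p := eq_sub_of_add_eq' hpq
    have hp : p * p = p := hp
    linear_combination (norm := noncomm_ring) -(hT * T) + hT - hp * T + hp
  rw [hfac, map_mul, det_mul_add_eq_cornerDet hqp hq, det_mul_add_eq_cornerDet hpq hp,
    ← hfac, mul_comm]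

theorem cornerDet_mul (hpq : p + q = 1) (hp : IsIdempotentElem p) (S : Module.End R M)
    {T : Module.End R M} (hT : q * T * p = 0) :
    cornerDet p q (S * T) = cornerDet p q S * cornerDet p q T := by
  obtain rfl : q = 1 - p := eq_sub_of_add_eq' hpq
  have hp : p * p = p := hp
  have hprod : (p * S * p + (1 - p)) * (p * T * p + (1 - p)) = p * (S * T) * p + (1 - p) := by
    linear_combination (norm := noncomm_ring)
      p * S * hp * (T * p) - p * S * hp - hp * (T * p) + hp - p * S * hT
  rw [cornerDet, ← hprod, map_mul]
  rfl

end CornerDet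

theorem Q_via_modular_functions_general {G V : Type*} [Group G] [AddCommGroup V]
    [Module ℝ V]
    (A B : Subgroup G)
    (aL aR bL bR : G → G)
    (haL : ∀ g, aL g ∈ A) (hbR : ∀ g, bR g ∈ B)
    (haR : ∀ g, aR g ∈ A)
    (hdec₁ : ∀ g, g = aL g * bR g)
    (hdec₂ : ∀ g, g = bL g * aR g)
    (Ad : G →* Module.End ℝ V) (PA PB : Module.End ℝ V)
    (hsum : PA + PB = 1) (hPA : PA * PA = PA) (hPB : PB * PB = PB)
    (htriA : ∀ a ∈ A, PB * Ad a * PA = 0)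
    (htriB : ∀ b ∈ B, PA * Ad b * PB = 0) :
    ∀ g : G, Qfun Ad PA PB g =
      detA Ad PA PB (aL g) * detA Ad PA PB (bR g) /
        (detA Ad PA PB (aR g) * detA Ad PA PB (bL g)) := by
  intro g
  have hsum' : PB + PA = 1 := by rw [add_comm, hsum]
  have det_ne_zero (x : G) : LinearMap.det (Ad x) ≠ 0 :=
    (((Group.isUnit x).map Ad).map LinearMap.det).ne_zero
  have hdet : LinearMap.det (Ad g) = LinearMap.det (Ad (aL g)) * LinearMap.det (Ad (bR g)) := by
    rw [← map_mul, ← map_mul, ← hdec₁]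
  have hdetA := cornerDet_mul hsum hPA (Ad (bL g)) (htriA _ (haR g))
  have hdetB := cornerDet_mul hsum' hPB (Ad (aL g)) (htriB _ (hbR g))
  have hdet_aL := det_eq_cornerDet_mul_cornerDet hsum hPA (htriA _ (haL g))
  have hdet_bR := det_eq_cornerDet_mul_cornerDet hsum' hPB (htriB _ (hbR g))
  rw [← map_mul, ← hdec₂] at hdetA
  rw [← map_mul, ← hdec₁] at hdetB
  have hBaL : cornerDet PB PA (Ad (aL g)) ≠ 0 := right_ne_zero_of_mul (hdet_aL ▸ det_ne_zero _)
  have hBbR : cornerDet PB PA (Ad (bR g)) ≠ 0 := left_ne_zero_of_mul (hdet_bR ▸ det_ne_zero _)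
  change LinearMap.det (Ad g) / (cornerDet PA PB (Ad g) * cornerDet PB PA (Ad g)) =
    cornerDet PA PB (Ad (aL g)) * cornerDet PA PB (Ad (bR g)) /
      (cornerDet PA PB (Ad (aR g)) * cornerDet PA PB (Ad (bL g)))
  rw [hdet, hdet_aL, hdet_bR, hdetA, hdetB]
  field_simp

/-- `Q(g) = ψ_A(a_L g) φ_A(b_R g) / (ψ_A(a_R g) φ_A(b_L g))`. -/
theorem Q_via_modular_functions {G V : Type*} [Group G] [AddCommGroup V]
    [Module ℝ V] [FiniteDimensional ℝ V]
    (A B : Subgroup G) (hAB : A ⊓ B = ⊥)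
    (aL aR bL bR : G → G)
    (haL : ∀ g, aL g ∈ A) (hbR : ∀ g, bR g ∈ B)
    (hbL : ∀ g, bL g ∈ B) (haR : ∀ g, aR g ∈ A)
    (hdec₁ : ∀ g, g = aL g * bR g)
    (hdec₂ : ∀ g, g = bL g * aR g)
    (Ad : G →* Module.End ℝ V) (PA PB : Module.End ℝ V)
    (hsum : PA + PB = 1) (hPA : PA * PA = PA) (hPB : PB * PB = PB)
    (hPAB : PA * PB = 0) (hPBA : PB * PA = 0)
    (htriA : ∀ a ∈ A, PB * Ad a * PA = 0)
    (htriB : ∀ b ∈ B, PA * Ad b * PB = 0)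
    (hinv : ∀ g : G, LinearMap.det (PA * Ad g * PA + PB) ≠ 0 ∧
      LinearMap.det (PB * Ad g * PB + PA) ≠ 0) :
    ∀ g : G, Qfun Ad PA PB g =
      detA Ad PA PB (aL g) * detA Ad PA PB (bR g) /
        (detA Ad PA PB (aR g) * detA Ad PA PB (bL g)) :=
  Q_via_modular_functions_general A B aL aR bL bR haL hbR haR hdec₁ hdec₂ Ad PA PB hsum hPA hPB
    htriA htriB
end

section
/- For a double Lie group (G; A, B), for b ∈ B and a ∈ A with block decompositions Ad(a) = (α₁ α₂; 0 α₄) and Ad(b) = (β₁ 0; β₃ β₄) with respect to 𝔤 = 𝔞 ⊕ 𝔟, one has Q(b·a) = det(β₄ α₄) / det(β₃ α₂ + β₄ α₄). -/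
/-! For complementary idempotents `p + q = 1`, an endomorphism with `p m q = 0` factors as
`(p m p + q) (1 + q m p) (q m q + p)`, and `q m p` squares to zero, so `det m` is the product
of the determinants of its diagonal blocks. This gives `det Ad(b) = det β₁ det β₄` and
`det Ad(a) = det α₁ det α₄`. By triangularity the `𝔞`-block of `Ad(b a)` is `β₁ α₁`, which
cancels `det β₁ det α₁` out of `Q(b a)`, while the `𝔟`-block of `Ad(b a)` is
`β₃ α₂ + β₄ α₄`. -/

section ComplementaryIdempotents

variable {R : Type*} [Ring R] {p q : R}

theorem IsIdempotentElem.of_add_eq_one (hp : IsIdempotentElem p) (hpq : p + q = 1) :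
    IsIdempotentElem q := by
  obtain rfl : q = 1 - p := eq_sub_of_add_eq' hpq
  exact hp.one_sub

theorem IsIdempotentElem.mul_eq_zero_of_add_eq_one (hp : IsIdempotentElem p)
    (hpq : p + q = 1) : p * q = 0 := by
  obtain rfl : q = 1 - p := eq_sub_of_add_eq' hpq
  exact hp.mul_one_sub_self

theorem IsIdempotentElem.mul_eq_zero_of_add_eq_one' (hp : IsIdempotentElem p)
    (hpq : p + q = 1) : q * p = 0 := by
  obtain rfl : q = 1 - p := eq_sub_of_add_eq' hpq
  exact hp.one_sub_mul_self

theorem IsIdempotentElem.mul_mul_eq_zero_of_add_eq_one (hp : IsIdempotentElem p)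
    (hpq : p + q = 1) (y : R) : y * p * q = 0 := by
  rw [mul_assoc, hp.mul_eq_zero_of_add_eq_one hpq, mul_zero]

theorem IsIdempotentElem.mul_mul_eq_zero_of_add_eq_one' (hp : IsIdempotentElem p)
    (hpq : p + q = 1) (y : R) : y * q * p = 0 := by
  rw [mul_assoc, hp.mul_eq_zero_of_add_eq_one' hpq, mul_zero]

theorem corner_add_mul_corner_add (hp : IsIdempotentElem p) (hpq : p + q = 1) (x y : R) :
    (p * x * p + q) * (p * y * p + q) = p * x * p * (p * y * p) + q := by
  have hq := hp.of_add_eq_one hpq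
  simp only [mul_add, add_mul, ← mul_assoc, hp.mul_mul_self, hq.eq,
    hp.mul_mul_eq_zero_of_add_eq_one hpq, hp.mul_eq_zero_of_add_eq_one' hpq, add_zero, zero_add]

theorem corner_mul (hp : IsIdempotentElem p) (hpq : p + q = 1) (m n : R) :
    p * (m * n) * p = p * m * q * (q * n * p) + p * m * p * (p * n * p) := by
  have hq := hp.of_add_eq_one hpq
  calc p * (m * n) * p = p * (m * (p + q) * n) * p := by rw [hpq, mul_one]
    _ = _ := by
      simp only [mul_add, add_mul, ← mul_assoc, hp.mul_mul_self, hq.mul_mul_self]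
      abel

theorem eq_corner_mul_unipotent_mul_corner (hp : IsIdempotentElem p) (hpq : p + q = 1) {m : R}
    (hm : p * m * q = 0) :
    m = (p * m * p + q) * (1 + q * m * p) * (q * m * q + p) := by
  have hq := hp.of_add_eq_one hpq
  calc m = (p + q) * m * (p + q) := by rw [hpq, one_mul, mul_one]
    _ = _ := by
      simp only [mul_add, add_mul, ← mul_assoc, mul_one, hp.mul_mul_self, hq.eq, hm,
        hp.mul_mul_eq_zero_of_add_eq_one hpq, hp.mul_eq_zero_of_add_eq_one' hpq, add_zero,
        zero_add]
      abel

end ComplementaryIdempotents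

namespace LinearMap

variable {K V : Type*} [Field K] [AddCommGroup V] [Module K V]

theorem det_one_add_of_isNilpotent {w : Module.End K V} (hw : IsNilpotent w) :
    LinearMap.det (1 + w) = 1 := by
  by_cases hV : Module.Finite K V
  · have h := congrArg (Polynomial.eval 1) hw.neg.charpoly_eq_X_pow_finrank
    rwa [eval_charpoly, map_one, sub_neg_eq_add, Polynomial.eval_pow, Polynomial.eval_X,
      one_pow] at h
  · exact det_eq_one_of_not_module_finite hV _

theorem det_eq_det_corner_mul_det_corner {p q m : Module.End K V} (hp : IsIdempotentElem p)
    (hpq : p + q = 1) (hm : p * m * q = 0) :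
    LinearMap.det m = LinearMap.det (p * m * p + q) * LinearMap.det (q * m * q + p) := by
  have hnil : IsNilpotent (q * m * p) :=
    ⟨2, by simp only [sq, ← mul_assoc, hp.mul_mul_eq_zero_of_add_eq_one hpq, zero_mul]⟩
  conv_lhs => rw [eq_corner_mul_unipotent_mul_corner hp hpq hm]
  rw [map_mul, map_mul, det_one_add_of_isNilpotent hnil, mul_one]

end LinearMap

theorem Q_ba_formula_general {G V : Type*} [Group G] [AddCommGroup V] [Module ℝ V]
    (A B : Subgroup G)
    (Ad : G →* Module.End ℝ V) (PA PB : Module.End ℝ V)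
    (hsum : PA + PB = 1) (hPA : PA * PA = PA)
    (htriA : ∀ a ∈ A, PB * Ad a * PA = 0)
    (htriB : ∀ b ∈ B, PA * Ad b * PB = 0)
    (hinv : ∀ g : G, LinearMap.det (PA * Ad g * PA + PB) ≠ 0 ∧
      LinearMap.det (PB * Ad g * PB + PA) ≠ 0) :
    ∀ b ∈ B, ∀ a ∈ A,
      Qfun Ad PA PB (b * a) =
        LinearMap.det ((PB * Ad b * PB) * (PB * Ad a * PB) + PA) /
          LinearMap.det ((PB * Ad b * PA) * (PA * Ad a * PB) +
            (PB * Ad b * PB) * (PB * Ad a * PB) + PA) := by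
  intro b hb a ha
  have hsum' : PB + PA = 1 := by rwa [add_comm]
  have hPB : IsIdempotentElem PB := IsIdempotentElem.of_add_eq_one hPA hsum
  have hdet_b := LinearMap.det_eq_det_corner_mul_det_corner hPA hsum (htriB b hb)
  have hdet_a := LinearMap.det_eq_det_corner_mul_det_corner hPB hsum' (htriA a ha)
  have hg₁ : PA * Ad (b * a) * PA + PB = (PA * Ad b * PA + PB) * (PA * Ad a * PA + PB) := by
    rw [map_mul, corner_mul hPA hsum, htriB b hb, zero_mul, zero_add,
      corner_add_mul_corner_add hPA hsum]
  have hg₄ : PB * Ad b * PA * (PA * Ad a * PB) + PB * Ad b * PB * (PB * Ad a * PB) + PA =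
      PB * Ad (b * a) * PB + PA := by
    rw [map_mul, corner_mul hPB hsum']
  rw [Qfun, hg₄, hg₁, ← corner_add_mul_corner_add hPB hsum', map_mul Ad,
    map_mul LinearMap.det, map_mul LinearMap.det, map_mul LinearMap.det, hdet_b, hdet_a]
  field_simp [(hinv b).1, (hinv a).1]

/-- For `b ∈ B`, `a ∈ A` with blocks `Ad a = (α₁ α₂; 0 α₄)`,
`Ad b = (β₁ 0; β₃ β₄)`, one has `Q(b·a) = det(β₄α₄) / det(β₃α₂ + β₄α₄)`. -/
theorem Q_ba_formula {G V : Type*} [Group G] [AddCommGroup V] [Module ℝ V]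
    [FiniteDimensional ℝ V]
    (A B : Subgroup G) (hAB : A ⊓ B = ⊥)
    (hG : ∀ g : G, ∃ a ∈ A, ∃ b ∈ B, g = a * b)
    (Ad : G →* Module.End ℝ V) (PA PB : Module.End ℝ V)
    (hsum : PA + PB = 1) (hPA : PA * PA = PA) (hPB : PB * PB = PB)
    (hPAB : PA * PB = 0) (hPBA : PB * PA = 0)
    (htriA : ∀ a ∈ A, PB * Ad a * PA = 0)
    (htriB : ∀ b ∈ B, PA * Ad b * PB = 0)
    (hinv : ∀ g : G, LinearMap.det (PA * Ad g * PA + PB) ≠ 0 ∧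
      LinearMap.det (PB * Ad g * PB + PA) ≠ 0) :
    ∀ b ∈ B, ∀ a ∈ A,
      Qfun Ad PA PB (b * a) =
        LinearMap.det ((PB * Ad b * PB) * (PB * Ad a * PB) + PA) /
          LinearMap.det ((PB * Ad b * PA) * (PA * Ad a * PB) +
            (PB * Ad b * PB) * (PB * Ad a * PB) + PA) :=
  Q_ba_formula_general A B Ad PA PB hsum hPA htriA htriB hinv
end

section
/- Let (G; A, B) be a double Lie group and define on G the partial multiplication m_A with graph {(b₁ a b₂; b₁ a, a b₂) : a ∈ A, b₁, b₂ ∈ B}, identity set A, and inverse s_A(g) = a_R(g) b_R(g)⁻¹. Then G_A := (G, m_A, A, s_A) is a groupoid: in particular m_A is associative where defined, s_A(g) is composable with g with product e_R(g) := a_R(g) ∈ A, and the left and right projections are e_L(g) = a_L(g), e_R(g) = a_R(g). -/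
/-- `G_A = (G, m_A, A, s_A)` is a groupoid: the partial product `g·h := g * b_R(h)`
(defined when `a_R(g) = a_L(h)`) is associative, `s_A(g) = a_R(g)·b_R(g)⁻¹` is
composable with `g` with products giving the units, and the left/right projections
are `e_L(g) = a_L(g)`, `e_R(g) = a_R(g)`. -/
theorem GA_is_groupoid {G : Type*} [Group G] (A B : Subgroup G)
    (hAB : A ⊓ B = ⊥)
    (aL aR bL bR : G → G)
    (haL : ∀ g, aL g ∈ A) (hbR : ∀ g, bR g ∈ B)
    (hbL : ∀ g, bL g ∈ B) (haR : ∀ g, aR g ∈ A)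
    (hdec₁ : ∀ g, g = aL g * bR g)
    (hdec₂ : ∀ g, g = bL g * aR g) :
    (∀ g h k : G, aR g = aL h → aR h = aL k →
      aR (g * bR h) = aL k ∧ aL (g * bR h) = aL g ∧
      (g * bR h) * bR k = g * bR (h * bR k)) ∧
    (∀ g : G,
      aR (aR g * (bR g)⁻¹) = aL g ∧
      (aR g * (bR g)⁻¹) * bR g = aR g ∧
      g * bR (aR g * (bR g)⁻¹) = aL g) := by
  -- uniqueness of left (A·B) decompositions
  have uniqL : ∀ (x a b : G), a ∈ A → b ∈ B → x = a * b → aL x = a ∧ bR x = b := by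
    intro x a b ha hb hx
    have hd : aL x * bR x = a * b := (hdec₁ x).symm.trans hx
    have h1 : a⁻¹ * aL x = b * (bR x)⁻¹ := by
      calc a⁻¹ * aL x = a⁻¹ * (aL x * bR x) * (bR x)⁻¹ := by group
        _ = a⁻¹ * (a * b) * (bR x)⁻¹ := by rw [hd]
        _ = b * (bR x)⁻¹ := by group
    have hmem : a⁻¹ * aL x ∈ A ⊓ B :=
      ⟨mul_mem (A.inv_mem ha) (haL x), h1 ▸ mul_mem hb (B.inv_mem (hbR x))⟩
    rw [hAB, Subgroup.mem_bot] at hmem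
    have h2 : b * (bR x)⁻¹ = 1 := h1 ▸ hmem
    constructor
    · have : a * (a⁻¹ * aL x) = a * 1 := by rw [hmem]
      simpa [mul_assoc] using this
    · have : b * (bR x)⁻¹ * bR x = 1 * bR x := by rw [h2]
      simpa [mul_assoc] using this.symm
  -- uniqueness of right (B·A) decompositions
  have uniqR : ∀ (x a b : G), a ∈ A → b ∈ B → x = b * a → bL x = b ∧ aR x = a := by
    intro x a b ha hb hx
    have hd : bL x * aR x = b * a := (hdec₂ x).symm.trans hx
    have h1 : (bL x)⁻¹ * b = aR x * a⁻¹ := by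
      calc (bL x)⁻¹ * b = (bL x)⁻¹ * (b * a) * a⁻¹ := by group
        _ = (bL x)⁻¹ * (bL x * aR x) * a⁻¹ := by rw [hd]
        _ = aR x * a⁻¹ := by group
    have hmem : (bL x)⁻¹ * b ∈ A ⊓ B :=
      ⟨h1 ▸ mul_mem (haR x) (A.inv_mem ha), mul_mem (B.inv_mem (hbL x)) hb⟩
    rw [hAB, Subgroup.mem_bot] at hmem
    have h2 : aR x * a⁻¹ = 1 := h1 ▸ hmem
    constructor
    · have : bL x * ((bL x)⁻¹ * b) = bL x * 1 := by rw [hmem]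
      simpa [mul_assoc] using this.symm
    · have : aR x * a⁻¹ * a = 1 * a := by rw [h2]
      simpa [mul_assoc] using this
  constructor
  · intro g h k hgh hhk
    have e1 : g * bR h = aL g * (bR g * bR h) := by
      rw [← mul_assoc, ← hdec₁ g]
    have e2 : g * bR h = (bL g * bL h) * aR h := by
      calc g * bR h = bL g * (aR g * bR h) := by rw [← mul_assoc, ← hdec₂ g]
        _ = bL g * (aL h * bR h) := by rw [hgh]
        _ = bL g * h := by rw [← hdec₁ h]
        _ = bL g * (bL h * aR h) := by rw [← hdec₂ h]
        _ = (bL g * bL h) * aR h := by rw [mul_assoc]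
    obtain ⟨hL1, hR1⟩ := uniqL (g * bR h) (aL g) (bR g * bR h) (haL g)
      (mul_mem (hbR g) (hbR h)) e1
    obtain ⟨_, hR2⟩ := uniqR (g * bR h) (aR h) (bL g * bL h) (haR h)
      (mul_mem (hbL g) (hbL h)) e2
    refine ⟨hR2.trans hhk, hL1, ?_⟩
    have e3 : h * bR k = aL h * (bR h * bR k) := by rw [← mul_assoc, ← hdec₁ h]
    obtain ⟨_, hR3⟩ := uniqL (h * bR k) (aL h) (bR h * bR k) (haL h)
      (mul_mem (hbR h) (hbR k)) e3
    rw [hR3, mul_assoc]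
  · intro g
    obtain ⟨hLs, hRs⟩ := uniqL (aR g * (bR g)⁻¹) (aR g) (bR g)⁻¹ (haR g)
      (B.inv_mem (hbR g)) rfl
    have e2 : aR g * (bR g)⁻¹ = (bL g)⁻¹ * aL g := by
      calc aR g * (bR g)⁻¹ = (bL g)⁻¹ * (bL g * aR g) * (bR g)⁻¹ := by group
        _ = (bL g)⁻¹ * g * (bR g)⁻¹ := by rw [← hdec₂ g]
        _ = (bL g)⁻¹ * (aL g * bR g) * (bR g)⁻¹ := by rw [← hdec₁ g]
        _ = (bL g)⁻¹ * aL g := by group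
    obtain ⟨_, hAs⟩ := uniqR (aR g * (bR g)⁻¹) (aL g) (bL g)⁻¹ (haL g)
      (B.inv_mem (hbL g)) e2
    refine ⟨hAs, by group, ?_⟩
    rw [hRs]
    calc g * (bR g)⁻¹ = aL g * bR g * (bR g)⁻¹ := by rw [← hdec₁ g]
      _ = aL g := by group
end

section
/- In a double Lie group (G; A, B), the identities b_L(b_L(a₁a₂b)⁻¹ a₁ b₁) = b_L(a₁a₂b)⁻¹ b_L(a₁b₁), a_R(b_L(a₁a₂b)⁻¹ a₁ b₁) = a_R(a₁ b₁), and a_L(b_L(a₁a₂b)⁻¹ a₁ b₁) = a_R(a₁ a₂ b) · a_R(a₂ b)⁻¹ hold for all a₁, a₂ ∈ A and b, b₁ ∈ B. -/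
/-- Uniqueness of decompositions `a * b = a' * b'` with trivial intersection. -/
lemma unique_decomp {G : Type*} [Group G] (A B : Subgroup G) (hAB : A ⊓ B = ⊥)
    {a a' b b' : G} (ha : a ∈ A) (ha' : a' ∈ A) (hb : b ∈ B) (hb' : b' ∈ B)
    (h : a * b = a' * b') : a = a' ∧ b = b' := by
  have hba : a'⁻¹ * a = b' * b⁻¹ := by
    have := congrArg (fun x => a'⁻¹ * x * b⁻¹) h
    simpa [mul_assoc] using this
  have hmem : a'⁻¹ * a ∈ A ⊓ B := by
    refine ⟨A.mul_mem (A.inv_mem ha') ha, ?_⟩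
    rw [hba]; exact B.mul_mem hb' (B.inv_mem hb)
  rw [hAB, Subgroup.mem_bot] at hmem
  have h1 : a = a' := (inv_mul_eq_one.mp hmem).symm
  refine ⟨h1, ?_⟩
  rw [h1] at h
  exact mul_left_cancel h

/-- The identities `b_L(b_L(a₁a₂b)⁻¹ a₁ b₁) = b_L(a₁a₂b)⁻¹ b_L(a₁b₁)`,
`a_R(b_L(a₁a₂b)⁻¹ a₁ b₁) = a_R(a₁ b₁)`, and
`a_L(b_L(a₁a₂b)⁻¹ a₁ b₁) = a_R(a₁ a₂ b)·a_R(a₂ b)⁻¹`. -/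
theorem projection_identities {G : Type*} [Group G] (A B : Subgroup G)
    (hAB : A ⊓ B = ⊥)
    (aL aR bL bR : G → G)
    (haL : ∀ g, aL g ∈ A) (hbR : ∀ g, bR g ∈ B)
    (hbL : ∀ g, bL g ∈ B) (haR : ∀ g, aR g ∈ A)
    (hdec₁ : ∀ g, g = aL g * bR g)
    (hdec₂ : ∀ g, g = bL g * aR g) :
    ∀ a₁ ∈ A, ∀ a₂ ∈ A, ∀ b ∈ B, ∀ b₁ ∈ B,
      bL ((bL (a₁ * a₂ * b))⁻¹ * a₁ * b₁) = (bL (a₁ * a₂ * b))⁻¹ * bL (a₁ * b₁) ∧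
      aR ((bL (a₁ * a₂ * b))⁻¹ * a₁ * b₁) = aR (a₁ * b₁) ∧
      aL ((bL (a₁ * a₂ * b))⁻¹ * a₁ * b₁) = aR (a₁ * a₂ * b) * (aR (a₂ * b))⁻¹ := by
  intro a₁ ha₁ a₂ ha₂ b hb b₁ hb₁
  set g := (bL (a₁ * a₂ * b))⁻¹ * a₁ * b₁ with hg
  -- First decomposition: g = ((bL(a₁a₂b))⁻¹ * bL(a₁b₁)) * aR(a₁b₁)
  have e1 : bL g * aR g = ((bL (a₁ * a₂ * b))⁻¹ * bL (a₁ * b₁)) * aR (a₁ * b₁) := by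
    conv_lhs => rw [← hdec₂ g]
    conv_rhs => rw [mul_assoc, ← hdec₂ (a₁ * b₁)]
    rw [hg, mul_assoc]
  have h12 := unique_decomp B A (by rw [inf_comm]; exact hAB)
    (hbL g) (B.mul_mem (B.inv_mem (hbL _)) (hbL _)) (haR g) (haR _) e1
  refine ⟨h12.1, h12.2, ?_⟩
  -- Second decomposition: g = (aR(a₁a₂b) * aR(a₂b)⁻¹) * (bL(a₂b)⁻¹ * b₁)
  have key : (bL (a₁ * a₂ * b))⁻¹ = aR (a₁ * a₂ * b) * (a₁ * a₂ * b)⁻¹ := by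
    have h' : bL (a₁ * a₂ * b) = (a₁ * a₂ * b) * (aR (a₁ * a₂ * b))⁻¹ :=
      eq_mul_inv_of_mul_eq (hdec₂ (a₁ * a₂ * b)).symm
    rw [h', mul_inv_rev, inv_inv]
  have key3 : (a₁ * a₂ * b)⁻¹ * a₁ = (aR (a₂ * b))⁻¹ * (bL (a₂ * b))⁻¹ := by
    have h1 : (a₁ * a₂ * b)⁻¹ * a₁ = (a₂ * b)⁻¹ := by group
    rw [h1]
    conv_lhs => rw [hdec₂ (a₂ * b)]
    rw [mul_inv_rev]
  have e2 : aL g * bR g = (aR (a₁ * a₂ * b) * (aR (a₂ * b))⁻¹) * ((bL (a₂ * b))⁻¹ * b₁) := by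
    conv_lhs => rw [← hdec₁ g]
    rw [hg, key, mul_assoc (aR (a₁ * a₂ * b)) _ a₁, key3]
    group
  have h3 := unique_decomp A B hAB (haL g)
    (A.mul_mem (haR _) (A.inv_mem (haR _))) (hbR g)
    (B.mul_mem (B.inv_mem (hbL _)) hb₁) e2
  exact h3.1
end
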